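/- arXiv:2212.05744 — 7 statements merged into one kernel-verified Lean document; each statement's English description precedes it below -/
import Mathlib

section
/- For a simple connected graph G with n nodes and m edges, the sum over all edges (i,j) of the commute times C_{ij} equals 2m(n-1). -/
/-! The first-step equations say that the Laplacian applied to `T · j` equals the degree at every
vertex other than `j`. The Laplacian is symmetric with zero row sums, so the entries of any vector
in its image add up to zero; hence its entry at `j`, which is `-∑_{k ~ j} T k j`, equals
`-(2m - deg j)`. Summing over `j`, the darts `(k, j)` contribute `2mn - 2m`, and every edge carries
two darts. -/

open Finset Matrix

namespace SimpleGraph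

variable {V : Type*} [Fintype V] (G : SimpleGraph V) [DecidableRel G.Adj]

theorem sum_lapMatrix_mulVec [DecidableEq V] {R : Type*} [CommRing R] (x : V → R) :
    ∑ i, (G.lapMatrix R *ᵥ x) i = 0 := by
  have hcol : (1 : V → R) ᵥ* G.lapMatrix R = 0 := by
    rw [← (G.isSymm_lapMatrix R).eq, vecMul_transpose]
    exact G.lapMatrix_mulVec_const_eq_zero
  rw [← one_dotProduct (G.lapMatrix R *ᵥ x), dotProduct_mulVec, hcol, zero_dotProduct]

/-- With `h = T · j`, this is the return-time identity `E[return time to j] = 2 |E| / deg j`. -/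
theorem sum_neighborFinset_eq_of_hitting_equations [DecidableEq V] {R : Type*} [CommRing R]
    {h : V → R} {j : V} (hj : h j = 0)
    (hstep : ∀ i, i ≠ j → (G.degree i : R) * h i = G.degree i + ∑ k ∈ G.neighborFinset i, h k) :
    ∑ k ∈ G.neighborFinset j, h k = 2 * #G.edgeFinset - G.degree j := by
  have hL : ∀ i, (G.lapMatrix R *ᵥ h) i
      = if i = j then -∑ k ∈ G.neighborFinset j, h k else (G.degree i : R) := by
    intro i
    rw [lapMatrix_mulVec_apply]
    split_ifs with hij
    · rw [hij, hj, mul_zero, zero_sub]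
    · rw [hstep i hij, add_sub_cancel_right]
  have hdeg : ∑ i ∈ univ.erase j, (G.degree i : R) = 2 * #G.edgeFinset - G.degree j := by
    rw [sum_erase_eq_sub (mem_univ j), ← Nat.cast_sum, sum_degrees_eq_twice_card_edges]
    push_cast; ring
  have := G.sum_lapMatrix_mulVec h
  simp_rw [hL] at this
  rw [sum_ite, filter_eq' univ j, if_pos (mem_univ j), sum_singleton, filter_ne' univ j, hdeg]
    at this
  linear_combination -this

theorem sum_darts_swap {M : Type*} [AddCommMonoid M] (f : V → V → M) :
    ∑ d : G.Dart, f d.snd d.fst = ∑ d : G.Dart, f d.fst d.snd :=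
  Fintype.sum_equiv (Function.Involutive.toPerm _ Dart.symm_involutive) _ _ fun _ => rfl

theorem sum_darts_eq_sum_neighborFinset [DecidableEq V] {M : Type*} [AddCommMonoid M]
    (f : V → V → M) :
    ∑ d : G.Dart, f d.fst d.snd = ∑ i, ∑ k ∈ G.neighborFinset i, f i k := by
  rw [← sum_fiberwise_of_maps_to (g := fun d : G.Dart => d.fst) (t := univ)
    fun d _ => mem_univ _]
  refine sum_congr rfl fun i _ => ?_
  rw [G.dart_fst_fiber i, sum_image fun _ _ _ _ h => G.dartOfNeighborSet_injective i h,
    ← sum_coe_sort (G.neighborFinset i)]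
  exact Fintype.sum_equiv (Equiv.subtypeEquivRight fun k => by simp) _ _ fun _ => rfl

theorem sum_edgeFinset_lift_eq_sum_darts [DecidableEq V] {M : Type*} [AddCommMonoid M]
    (f : V → V → M) :
    ∑ e ∈ G.edgeFinset, Sym2.lift ⟨fun i j => f i j + f j i, fun _ _ => add_comm _ _⟩ e
      = ∑ d : G.Dart, f d.fst d.snd := by
  rw [← sum_fiberwise_of_maps_to (g := Dart.edge) (t := G.edgeFinset)
    fun d _ => mem_edgeFinset.2 d.edge_mem]
  refine sum_congr rfl fun e he => ?_
  induction e with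
  | _ u v =>
    let d : G.Dart := ⟨(u, v), mem_edgeFinset.1 he⟩
    rw [show univ.filter (fun d' : G.Dart => d'.edge = s(u, v)) = {d, d.symm} from d.edge_fiber,
      sum_pair d.symm_ne.symm]
    rfl

end SimpleGraph

/-- Foster's theorem: for a simple connected graph with `n` nodes and `m` edges,
the sum over all edges `(i,j)` of the commute times `C_ij = T_ij + T_ji`
equals `2 m (n - 1)`.  Here `T` is the hitting-time function of the simple
random walk, characterized by `T j j = 0` and the first-step equations. -/
theorem foster_sum_commute_times {V : Type*} [Fintype V] [DecidableEq V]
    (G : SimpleGraph V) [DecidableRel G.Adj]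
    (T : V → V → ℝ)
    (hT0 : ∀ j, T j j = 0)
    (hT : ∀ i j, i ≠ j →
      (G.degree i : ℝ) * T i j = (G.degree i : ℝ) + ∑ k ∈ G.neighborFinset i, T k j) :
    ∑ e ∈ G.edgeFinset,
        Sym2.lift ⟨fun i j => T i j + T j i, fun i j => by ring⟩ e
      = 2 * (G.edgeFinset.card : ℝ) * ((Fintype.card V : ℝ) - 1) := by
  have hreturn : ∀ j, ∑ k ∈ G.neighborFinset j, T k j = 2 * #G.edgeFinset - G.degree j :=
    fun j => G.sum_neighborFinset_eq_of_hitting_equations (hT0 j) fun i hi => hT i j hi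
  rw [G.sum_edgeFinset_lift_eq_sum_darts, ← G.sum_darts_swap,
    G.sum_darts_eq_sum_neighborFinset fun i k => T k i]
  simp only [hreturn]
  rw [sum_sub_distrib, sum_const, card_univ, nsmul_eq_mul, ← Nat.cast_sum,
    G.sum_degrees_eq_twice_card_edges]
  push_cast
  ring
end

section
/- Let G be a simple connected non-bipartite graph with n nodes, m edges, and normalized adjacency matrix P with eigenvalues 1 = λ_1 > λ_2 ≥ ... ≥ λ_n and orthonormal eigenvectors v_k = (v_{k1},...,v_{kn}). Then the hitting time from node i to node j (i ≠ j) of the simple random walk satisfies T_{ij} = 2m · Σ_{k=2}^n (1/(1−λ_k)) · (v_{kj}²/d_j − v_{ki}v_{kj}/√(d_i d_j)). -/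
open Matrix Finset

-- maximum principle propagation along a walk
lemma harm_walk_max {n : ℕ} (G : SimpleGraph (Fin n)) [DecidableRel G.Adj]
    (g : Fin n → ℝ) (M : ℝ) (hM : ∀ i, g i ≤ M) :
    ∀ a b (p : G.Walk a b),
      (∀ i, i ≠ b → (G.degree i : ℝ) * g i = ∑ l ∈ G.neighborFinset i, g l) →
      g a = M → g b = M := by
  intro a b p
  induction p with
  | nil => exact fun _ => id
  | @cons a b j h p ih =>
    intro hharm hga
    by_cases haj : a = j
    · rwa [← haj]
    · apply ih hharm
      by_contra hb
      have hblt : g b < M := lt_of_le_of_ne (hM b) hb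
      have hsum : ∑ l ∈ G.neighborFinset a, g l = (G.degree a : ℝ) * M := by
        rw [← hharm a haj, hga]
      have hlt : ∑ l ∈ G.neighborFinset a, g l < ∑ l ∈ G.neighborFinset a, M := by
        apply Finset.sum_lt_sum (fun l _ => hM l)
        exact ⟨b, (SimpleGraph.mem_neighborFinset G a b).mpr h, hblt⟩
      rw [Finset.sum_const, nsmul_eq_mul, SimpleGraph.card_neighborFinset_eq_degree] at hlt
      exact absurd hsum (ne_of_lt hlt)

-- uniqueness: a function harmonic away from j and vanishing at j is zero
lemma harm_zero {n : ℕ} [NeZero n] (G : SimpleGraph (Fin n)) [DecidableRel G.Adj]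
    (hG : G.Connected) (j : Fin n) (g : Fin n → ℝ) (hgj : g j = 0)
    (hharm : ∀ i, i ≠ j → (G.degree i : ℝ) * g i = ∑ l ∈ G.neighborFinset i, g l) :
    ∀ i, g i = 0 := by
  have key : ∀ (g : Fin n → ℝ), g j = 0 →
      (∀ i, i ≠ j → (G.degree i : ℝ) * g i = ∑ l ∈ G.neighborFinset i, g l) →
      ∀ i, g i ≤ 0 := by
    intro g hgj hharm i
    have hne : (Finset.univ : Finset (Fin n)).Nonempty := Finset.univ_nonempty
    set M := Finset.univ.sup' hne g with hMdef
    have hM : ∀ i, g i ≤ M := fun i => Finset.le_sup' g (Finset.mem_univ i)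
    obtain ⟨a, -, ha⟩ := Finset.exists_mem_eq_sup' hne g
    have hgjM : g j = M := by
      obtain ⟨p⟩ := hG.preconnected a j
      exact harm_walk_max G g M hM a j p hharm ha.symm
    have : M = 0 := by rw [← hgjM, hgj]
    exact (hM i).trans this.le
  intro i
  have h1 : g i ≤ 0 := key g hgj hharm i
  have h2 : (-g) i ≤ 0 := by
    apply key (-g) (by simp [hgj])
    intro a haj
    simp only [Pi.neg_apply, mul_neg, Finset.sum_neg_distrib, neg_inj]
    exact hharm a haj
  simp only [Pi.neg_apply, neg_nonpos] at h2
  linarith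

lemma alg_term (sl sj x y : ℝ) (hsl : sl ≠ 0) (hsj : sj ≠ 0) :
    x * y / (sl * sj) = (y / sj) * (sl⁻¹ * x) := by
  field_simp

lemma alg_perk (sa sj q w x lamk : ℝ) (hsa : sa ≠ 0) (hsj : sj ≠ 0)
    (hlam : (1:ℝ) - lamk ≠ 0) :
    (sa * sa) * ((1 / (1 - lamk)) * (q - w * x / (sa * sj)))
      - (1 / (1 - lamk)) * ((sa * sa) * q - (x / sj) * (lamk * (sa * w)))
    = -(sa * (w * x)) / sj := by
  field_simp
  ring

/-- Spectral formula for hitting times: for a simple connected non-bipartite graph with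
normalized adjacency matrix `P` having eigenvalues `1 = λ_1 > λ_2 ≥ … ≥ λ_n > −1` and
orthonormal eigenvectors `v_k`, the hitting time from `i` to `j` (`i ≠ j`) satisfies
`T_ij = 2m Σ_{k=2}^n (1/(1−λ_k)) (v_{kj}²/d_j − v_{ki} v_{kj}/√(d_i d_j))`. -/
theorem hitting_time_eigen_formula {n : ℕ} [NeZero n]
    (G : SimpleGraph (Fin n)) [DecidableRel G.Adj]
    (hG : G.Connected) (hnb : ¬ G.Colorable 2)
    (m : ℕ) (hm : m = G.edgeFinset.card)
    (P : Matrix (Fin n) (Fin n) ℝ)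
    (hP : P = Matrix.diagonal (fun i => (Real.sqrt (G.degree i))⁻¹) * G.adjMatrix ℝ *
      Matrix.diagonal (fun i => (Real.sqrt (G.degree i))⁻¹))
    (lam : Fin n → ℝ) (v : Fin n → Fin n → ℝ)
    (heig : ∀ k, P.mulVec (v k) = lam k • v k)
    (horth : ∀ k l, ∑ i, v k i * v l i = if k = l then (1 : ℝ) else 0)
    (hlam0 : lam 0 = 1) (hlt : ∀ k, k ≠ 0 → lam k < 1) (hgt : ∀ k, -1 < lam k)
    (T : Fin n → Fin n → ℝ)
    (hT0 : ∀ j, T j j = 0)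
    (hT : ∀ i j, i ≠ j →
      (G.degree i : ℝ) * T i j = (G.degree i : ℝ) + ∑ k ∈ G.neighborFinset i, T k j)
    (i j : Fin n) (hij : i ≠ j) :
    T i j = 2 * (m : ℝ) * ∑ k ∈ Finset.univ.erase 0, (1 / (1 - lam k)) *
      ((v k j) ^ 2 / (G.degree j : ℝ)
        - v k i * v k j / Real.sqrt ((G.degree i : ℝ) * (G.degree j : ℝ))) := by
  classical
  have hnt : Nontrivial (Fin n) := ⟨⟨i, j, hij⟩⟩
  have hdpos : ∀ a, 0 < G.degree a := by
    intro a
    rw [SimpleGraph.degree_pos_iff_exists_adj]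
    obtain ⟨u, hu⟩ := exists_ne a
    obtain ⟨p⟩ := hG.preconnected a u
    cases p with
    | nil => exact absurd rfl hu
    | cons h _ => exact ⟨_, h⟩
  set s : Fin n → ℝ := fun a => Real.sqrt (G.degree a) with hsdef
  have hdpos' : ∀ a, (0:ℝ) < (G.degree a : ℝ) := fun a => by exact_mod_cast hdpos a
  have hs : ∀ a, 0 < s a := fun a => Real.sqrt_pos.mpr (hdpos' a)
  have hs2 : ∀ a, s a * s a = (G.degree a : ℝ) := fun a =>
    Real.mul_self_sqrt (le_of_lt (hdpos' a))
  have hmpos : (0:ℝ) < 2 * m := by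
    have h2m : (∑ a, G.degree a) = 2 * m := by rw [hm]; exact G.sum_degrees_eq_twice_card_edges
    have : 0 < ∑ a, G.degree a :=
      Finset.sum_pos (fun a _ => hdpos a) Finset.univ_nonempty
    rw [h2m] at this
    exact_mod_cast this
  -- eigen equation componentwise
  have heig' : ∀ k a, ∑ l ∈ G.neighborFinset a, (s l)⁻¹ * v k l = lam k * (s a * v k a) := by
    intro k a
    have h := congrFun (heig k) a
    rw [hP, ← Matrix.mulVec_mulVec, ← Matrix.mulVec_mulVec] at h
    rw [Matrix.mulVec_diagonal] at h
    rw [show (G.adjMatrix ℝ *ᵥ Matrix.diagonal (fun i => (s i)⁻¹) *ᵥ v k) a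
        = ∑ l ∈ G.neighborFinset a, (Matrix.diagonal (fun i => (s i)⁻¹) *ᵥ v k) l from
        G.adjMatrix_mulVec_apply a _] at h
    simp only [Matrix.mulVec_diagonal, Pi.smul_apply, smul_eq_mul] at h
    have h2 := congrArg (fun x => s a * x) h
    rw [← mul_assoc, mul_inv_cancel₀ (ne_of_gt (hs a)), one_mul] at h2
    rw [h2]; ring
  -- column orthonormality
  have hcol : ∀ a b : Fin n, ∑ k, v k a * v k b = if a = b then (1:ℝ) else 0 := by
    have hVVt : (Matrix.of v) * (Matrix.of v)ᵀ = 1 := by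
      ext k l
      simp only [Matrix.mul_apply, Matrix.transpose_apply, Matrix.of_apply, Matrix.one_apply]
      exact horth k l
    have hVtV := mul_eq_one_comm.mp hVVt
    intro a b
    have h := congrFun (congrFun hVtV a) b
    simp only [Matrix.mul_apply, Matrix.transpose_apply, Matrix.of_apply, Matrix.one_apply] at h
    exact h
  -- P is symmetric
  have hPsym : Pᵀ = P := by
    rw [hP]
    simp [Matrix.transpose_mul, Matrix.diagonal_transpose, mul_assoc]
  -- P fixes s
  have hPs : P *ᵥ s = s := by
    funext a
    rw [hP, ← Matrix.mulVec_mulVec, ← Matrix.mulVec_mulVec, Matrix.mulVec_diagonal]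
    rw [show (G.adjMatrix ℝ *ᵥ Matrix.diagonal (fun i => (s i)⁻¹) *ᵥ s) a
        = ∑ l ∈ G.neighborFinset a, (Matrix.diagonal (fun i => (s i)⁻¹) *ᵥ s) l from
        G.adjMatrix_mulVec_apply a _]
    simp only [Matrix.mulVec_diagonal]
    rw [Finset.sum_congr rfl (fun l _ => inv_mul_cancel₀ (ne_of_gt (hs l)))]
    rw [Finset.sum_const, nsmul_eq_mul, mul_one, SimpleGraph.card_neighborFinset_eq_degree]
    rw [inv_mul_eq_div, div_eq_iff (ne_of_gt (hs a))]
    exact (hs2 a).symm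
  -- coefficients of s in eigenbasis vanish for k ≠ 0
  have hck : ∀ k, k ≠ 0 → ∑ l, s l * v k l = 0 := by
    intro k hk
    have h1 : lam k * ∑ l, s l * v k l = ∑ l, s l * v k l := by
      calc lam k * ∑ l, s l * v k l = ∑ l, s l * (lam k * v k l) := by
            rw [Finset.mul_sum]; exact Finset.sum_congr rfl fun l _ => by ring
        _ = ∑ l, s l * (P *ᵥ v k) l := by
            refine Finset.sum_congr rfl fun l _ => ?_
            rw [heig k]; simp [smul_eq_mul]
        _ = s ⬝ᵥ (P *ᵥ v k) := rfl
        _ = (s ᵥ* P) ⬝ᵥ v k := Matrix.dotProduct_mulVec s P (v k)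
        _ = (Pᵀ *ᵥ s) ⬝ᵥ v k := by rw [Matrix.mulVec_transpose]
        _ = s ⬝ᵥ v k := by rw [hPsym, hPs]
        _ = ∑ l, s l * v k l := rfl
    have hlk := hlt k hk
    nlinarith [h1]
  -- expansion of s in the eigenbasis
  set c0 : ℝ := ∑ l, s l * v 0 l with hc0def
  have hexp : ∀ a, s a = c0 * v 0 a := by
    intro a
    have h1 : ∑ k, v k a * (∑ l, s l * v k l) = s a := by
      calc ∑ k, v k a * (∑ l, s l * v k l)
          = ∑ k, ∑ l, v k a * (s l * v k l) := by
            exact Finset.sum_congr rfl fun k _ => Finset.mul_sum _ _ _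
        _ = ∑ l, ∑ k, v k a * (s l * v k l) := Finset.sum_comm
        _ = ∑ l, s l * ∑ k, v k a * v k l := by
            refine Finset.sum_congr rfl fun l _ => ?_
            rw [Finset.mul_sum]
            exact Finset.sum_congr rfl fun k _ => by ring
        _ = ∑ l, s l * (if a = l then (1:ℝ) else 0) := by
            exact Finset.sum_congr rfl fun l _ => by rw [hcol a l]
        _ = s a := by simp
    have h2 : ∑ k, v k a * (∑ l, s l * v k l) = v 0 a * c0 := by
      apply Finset.sum_eq_single 0
      · intro k _ hk
        rw [hck k hk, mul_zero]
      · intro h; exact absurd (Finset.mem_univ 0) h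
    rw [h2] at h1
    rw [← h1]; ring
  have hc0sq : c0 * c0 = 2 * m := by
    have h1 : ∑ a, s a * s a = 2 * (m:ℝ) := by
      have h2m : (∑ a, G.degree a) = 2 * m := by rw [hm]; exact G.sum_degrees_eq_twice_card_edges
      rw [Finset.sum_congr rfl fun a _ => hs2 a]
      exact_mod_cast h2m
    calc c0 * c0 = c0 * c0 * ∑ k, v 0 k * v 0 k := by
          rw [show (∑ k, v 0 k * v 0 k) = (1:ℝ) by rw [horth 0 0]; simp]
          ring
      _ = ∑ k, (c0 * v 0 k) * (c0 * v 0 k) := by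
          rw [Finset.mul_sum]; exact Finset.sum_congr rfl fun k _ => by ring
      _ = ∑ a, s a * s a := by
          exact Finset.sum_congr rfl fun a _ => by rw [← hexp a]
      _ = 2 * m := h1
  have hv0 : ∀ a b, 2 * (m:ℝ) * (v 0 a * v 0 b) = s a * s b := by
    intro a b
    rw [hexp a, hexp b, ← hc0sq]; ring
  -- the candidate solution
  set F : Fin n → ℝ := fun a => 2 * (m:ℝ) * ∑ k ∈ Finset.univ.erase 0, (1 / (1 - lam k)) *
      ((v k j) ^ 2 / (G.degree j : ℝ) - v k a * v k j / (s a * s j)) with hFdef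
  -- F satisfies the same equations as T
  have hFkey : ∀ a, a ≠ j →
      (G.degree a : ℝ) * F a = (G.degree a : ℝ) + ∑ l ∈ G.neighborFinset a, F l := by
    intro a haj
    have hperk : ∀ k ∈ Finset.univ.erase 0,
        (G.degree a : ℝ) * ((1 / (1 - lam k)) *
            ((v k j) ^ 2 / (G.degree j : ℝ) - v k a * v k j / (s a * s j)))
          - ∑ l ∈ G.neighborFinset a, (1 / (1 - lam k)) *
            ((v k j) ^ 2 / (G.degree j : ℝ) - v k l * v k j / (s l * s j))
        = - (s a * (v k a * v k j)) / s j := by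
      intro k hk
      have hk0 : k ≠ 0 := (Finset.mem_erase.mp hk).1
      have hne1 : (1:ℝ) - lam k ≠ 0 := sub_ne_zero.mpr (ne_of_gt (by linarith [hlt k hk0]))
      have hsuml : ∑ l ∈ G.neighborFinset a, (1 / (1 - lam k)) *
            ((v k j) ^ 2 / (G.degree j : ℝ) - v k l * v k j / (s l * s j))
          = (1 / (1 - lam k)) * ((G.degree a : ℝ) * ((v k j) ^ 2 / (G.degree j : ℝ))
              - (v k j / s j) * (lam k * (s a * v k a))) := by
        rw [← Finset.mul_sum, Finset.sum_sub_distrib]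
        congr 2
        · rw [Finset.sum_const, nsmul_eq_mul, SimpleGraph.card_neighborFinset_eq_degree]
        · rw [← heig' k a, Finset.mul_sum]
          exact Finset.sum_congr rfl fun l _ =>
            alg_term (s l) (s j) (v k l) (v k j) (ne_of_gt (hs l)) (ne_of_gt (hs j))
      rw [hsuml, ← hs2 a]
      exact alg_perk (s a) (s j) ((v k j) ^ 2 / (G.degree j : ℝ)) (v k a) (v k j) (lam k)
        (ne_of_gt (hs a)) (ne_of_gt (hs j)) hne1
    have h1 : (G.degree a : ℝ) * F a - ∑ l ∈ G.neighborFinset a, F l = (G.degree a : ℝ) := by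
      have hFa : (G.degree a : ℝ) * F a = 2 * (m:ℝ) *
          ∑ k ∈ Finset.univ.erase 0, (G.degree a : ℝ) * ((1 / (1 - lam k)) *
            ((v k j) ^ 2 / (G.degree j : ℝ) - v k a * v k j / (s a * s j))) := by
        rw [hFdef]; rw [← Finset.mul_sum]; ring
      have hFl : ∑ l ∈ G.neighborFinset a, F l = 2 * (m:ℝ) *
          ∑ k ∈ Finset.univ.erase 0, ∑ l ∈ G.neighborFinset a, (1 / (1 - lam k)) *
            ((v k j) ^ 2 / (G.degree j : ℝ) - v k l * v k j / (s l * s j)) := by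
        rw [hFdef, ← Finset.mul_sum, Finset.sum_comm]
      rw [hFa, hFl, ← mul_sub, ← Finset.sum_sub_distrib]
      rw [Finset.sum_congr rfl hperk]
      have hsk : ∑ k ∈ Finset.univ.erase 0, - (s a * (v k a * v k j)) / s j
          = (s a / s j) * (v 0 a * v 0 j) := by
        have : ∑ k ∈ Finset.univ.erase 0, v k a * v k j
            = (∑ k, v k a * v k j) - v 0 a * v 0 j :=
          Finset.sum_erase_eq_sub (Finset.mem_univ 0)
        rw [show (∑ k ∈ Finset.univ.erase 0, - (s a * (v k a * v k j)) / s j)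
            = - (s a / s j) * ∑ k ∈ Finset.univ.erase 0, v k a * v k j from by
          rw [Finset.mul_sum]; exact Finset.sum_congr rfl fun k _ => by ring]
        rw [this, hcol a j, if_neg haj]
        ring
      rw [hsk]
      have h2 : 2 * (m:ℝ) * ((s a / s j) * (v 0 a * v 0 j))
          = (s a / s j) * (s a * s j) := by
        rw [← hv0 a j]; ring
      rw [h2, ← hs2 a, div_mul_eq_mul_div, mul_div_assoc, mul_div_cancel_right₀ _ (ne_of_gt (hs j))]
    linarith [h1]
  have hFj : F j = 0 := by
    show 2 * (m:ℝ) * ∑ k ∈ Finset.univ.erase 0, (1 / (1 - lam k)) *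
      ((v k j) ^ 2 / (G.degree j : ℝ) - v k j * v k j / (s j * s j)) = 0
    have hz : ∀ k ∈ Finset.univ.erase 0, (1 / (1 - lam k)) *
        ((v k j) ^ 2 / (G.degree j : ℝ) - v k j * v k j / (s j * s j)) = 0 := by
      intro k _
      rw [hs2 j]
      ring
    rw [Finset.sum_congr rfl hz]
    simp
  -- uniqueness
  have hg : ∀ a, T a j - F a = 0 := by
    apply harm_zero G hG j (fun a => T a j - F a)
    · rw [hT0 j, hFj]; ring
    · intro a haj
      rw [mul_sub, hT a j haj, hFkey a haj, Finset.sum_sub_distrib]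
      ring
  have hTF : T i j = F i := by linarith [hg i]
  rw [hTF]
  rw [show Real.sqrt ((G.degree i : ℝ) * (G.degree j : ℝ)) = s i * s j from
    Real.sqrt_mul (Nat.cast_nonneg _) _]
end

section
/- Let P_g be the normalized adjacency matrix of a graph G with degree matrix D_g and incidence matrix B_g, and let P_{g+1} = (1/(q+1)) times the (q+1)×(q+1) block matrix with P_g in the top-left block, D_g^{-1/2}B_g in the remaining top-row blocks, B_gᵀD_g^{-1/2} in the remaining left-column blocks, zero diagonal blocks and identity off-diagonal blocks elsewhere. If P_g v = λ v with λ ≠ −1, then the vector w with top block v and each of the q lower blocks equal to (1/(λ+1)) B_gᵀ D_g^{-1/2} v satisfies P_{g+1} w = ((λ+q)/(q+1)) w. -/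
open Matrix

/-- Edge corona spectral lemma, eigenvalue `(λ+q)/(q+1)`: if `P_g v = λ v` with `λ ≠ −1`,
then the vector with top block `v` and all `q` lower blocks `(1/(λ+1)) B_gᵀ D_g^{-1/2} v`
is an eigenvector of the block matrix `P_{g+1}` with eigenvalue `(λ+q)/(q+1)`. -/
theorem edge_corona_eigen_top (n m q : ℕ) (hq : 1 ≤ q)
    (A : Matrix (Fin n) (Fin n) ℝ) (d : Fin n → ℝ) (hd : ∀ i, 0 < d i)
    (B : Matrix (Fin n) (Fin m) ℝ)
    (hBB : B * Bᵀ = A + Matrix.diagonal d)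
    (Pg : Matrix (Fin n) (Fin n) ℝ)
    (hPg : Pg = Matrix.diagonal (fun i => (Real.sqrt (d i))⁻¹) * A *
      Matrix.diagonal (fun i => (Real.sqrt (d i))⁻¹))
    (Pnew : Matrix (Fin n ⊕ Fin q × Fin m) (Fin n ⊕ Fin q × Fin m) ℝ)
    (hP11 : ∀ i j, Pnew (Sum.inl i) (Sum.inl j) = (1 / ((q : ℝ) + 1)) * Pg i j)
    (hP12 : ∀ i a e, Pnew (Sum.inl i) (Sum.inr (a, e))
      = (1 / ((q : ℝ) + 1)) * ((Real.sqrt (d i))⁻¹ * B i e))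
    (hP21 : ∀ a e j, Pnew (Sum.inr (a, e)) (Sum.inl j)
      = (1 / ((q : ℝ) + 1)) * (B j e * (Real.sqrt (d j))⁻¹))
    (hP22 : ∀ a e b f, Pnew (Sum.inr (a, e)) (Sum.inr (b, f))
      = if a = b then 0 else if e = f then (1 / ((q : ℝ) + 1)) else 0)
    (lam : ℝ) (hlam : lam ≠ -1)
    (v : Fin n → ℝ) (hv : Pg.mulVec v = lam • v)
    (w : (Fin n ⊕ Fin q × Fin m) → ℝ)
    (hw1 : ∀ i, w (Sum.inl i) = v i)
    (hw2 : ∀ a e, w (Sum.inr (a, e)) = (1 / (lam + 1)) *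
      (Bᵀ.mulVec ((Matrix.diagonal (fun i => (Real.sqrt (d i))⁻¹)).mulVec v)) e) :
    Pnew.mulVec w = ((lam + (q : ℝ)) / ((q : ℝ) + 1)) • w := by
  classical
  have hlam1 : lam + 1 ≠ 0 := fun h => hlam (by linarith)
  have hq1 : (q : ℝ) + 1 ≠ 0 := by positivity
  set S : Matrix (Fin n) (Fin n) ℝ :=
    Matrix.diagonal (fun i => (Real.sqrt (d i))⁻¹) with hS
  set u : Fin m → ℝ := Bᵀ.mulVec (S.mulVec v) with hu
  have hsq : ∀ i, Real.sqrt (d i) ≠ 0 := fun i => (Real.sqrt_pos.mpr (hd i)).ne'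
  have hSapp : ∀ (y : Fin n → ℝ) (i : Fin n),
      S.mulVec y i = (Real.sqrt (d i))⁻¹ * y i := by
    intro y i; rw [hS, Matrix.mulVec_diagonal]
  have hSv : S.mulVec v = fun j => (Real.sqrt (d j))⁻¹ * v j :=
    funext (hSapp v)
  -- key identity: D^{-1/2} B u = (lam + 1) v
  have key : ∀ i, (Real.sqrt (d i))⁻¹ * (∑ e, B i e * u e) = (lam + 1) * v i := by
    intro i
    have h1 : B.mulVec u = A.mulVec (S.mulVec v)
        + (Matrix.diagonal d).mulVec (S.mulVec v) := by
      rw [hu, Matrix.mulVec_mulVec, hBB, Matrix.add_mulVec]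
    have h2 : (Real.sqrt (d i))⁻¹ * (A.mulVec (S.mulVec v)) i = lam * v i := by
      have hPv := congrFun hv i
      rw [hPg] at hPv
      have hre : (S * A * S).mulVec v = S.mulVec (A.mulVec (S.mulVec v)) := by
        rw [Matrix.mulVec_mulVec, Matrix.mulVec_mulVec]
      rw [hre, hSapp] at hPv
      simpa using hPv
    have h4 : (Real.sqrt (d i))⁻¹ * ((Matrix.diagonal d).mulVec (S.mulVec v)) i
        = v i := by
      rw [Matrix.mulVec_diagonal, hSapp]
      have hds : Real.sqrt (d i) * Real.sqrt (d i) = d i :=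
        Real.mul_self_sqrt (hd i).le
      rw [← hds]
      field_simp
      rw [Real.sqrt_sq (Real.sqrt_nonneg _)]
      exact mul_div_cancel_left₀ _ (pow_ne_zero 2 (hsq i))
    have h5 : (B.mulVec u) i = ∑ e, B i e * u e := rfl
    rw [← h5, h1]
    simp only [Pi.add_apply]
    rw [mul_add, h2, h4]; ring
  have hue : ∀ e, u e = ∑ j, B j e * ((Real.sqrt (d j))⁻¹ * v j) := by
    intro e
    rw [hu, hSv]
    simp [Matrix.mulVec, dotProduct, Matrix.transpose_apply]
  funext x
  cases x with
  | inl i =>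
    have hPv : ∑ j, Pg i j * v j = lam * v i := by
      have := congrFun hv i
      simpa [Matrix.mulVec, dotProduct] using this
    have expand : Pnew.mulVec w (Sum.inl i)
        = (∑ j, (1 / ((q : ℝ) + 1)) * Pg i j * v j)
        + ∑ a : Fin q, ∑ e : Fin m,
            (1 / ((q : ℝ) + 1)) * ((Real.sqrt (d i))⁻¹ * B i e)
              * ((1 / (lam + 1)) * u e) := by
      simp only [Matrix.mulVec, dotProduct, Fintype.sum_sum_type,
        Fintype.sum_prod_type, hP11, hP12, hw1, hw2, hu, hS]
    have hsum1 : ∑ j, (1 / ((q : ℝ) + 1)) * Pg i j * v j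
        = (1 / ((q : ℝ) + 1)) * (lam * v i) := by
      rw [← hPv, Finset.mul_sum]
      exact Finset.sum_congr rfl fun j _ => by ring
    have hsum2 : ∑ e : Fin m, (1 / ((q : ℝ) + 1)) * ((Real.sqrt (d i))⁻¹ * B i e)
        * ((1 / (lam + 1)) * u e)
        = (1 / ((q : ℝ) + 1)) * ((1 / (lam + 1)) * ((lam + 1) * v i)) := by
      rw [← key i]
      simp only [Finset.mul_sum]
      exact Finset.sum_congr rfl fun f _ => by ring
    rw [expand, hsum1, Finset.sum_congr rfl (fun a (_ : a ∈ Finset.univ) => hsum2),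
      Finset.sum_const, Finset.card_univ, Fintype.card_fin]
    simp only [Pi.smul_apply, hw1, smul_eq_mul, nsmul_eq_mul]
    field_simp
  | inr ae =>
    obtain ⟨a, e⟩ := ae
    have expand : Pnew.mulVec w (Sum.inr (a, e))
        = (∑ j, (1 / ((q : ℝ) + 1)) * (B j e * (Real.sqrt (d j))⁻¹) * v j)
        + ∑ b : Fin q, ∑ f : Fin m,
            (if a = b then 0 else if e = f then (1 / ((q : ℝ) + 1)) else 0)
              * ((1 / (lam + 1)) * u f) := by
      simp only [Matrix.mulVec, dotProduct, Fintype.sum_sum_type,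
        Fintype.sum_prod_type, hP21, hP22, hw1, hw2, hu, hS]
    have hsum1 : ∑ j, (1 / ((q : ℝ) + 1)) * (B j e * (Real.sqrt (d j))⁻¹) * v j
        = (1 / ((q : ℝ) + 1)) * u e := by
      rw [hue e, Finset.mul_sum]
      exact Finset.sum_congr rfl fun j _ => by ring
    have hinner : ∀ b : Fin q, ∑ f : Fin m,
        (if a = b then 0 else if e = f then (1 / ((q : ℝ) + 1)) else 0)
          * ((1 / (lam + 1)) * u f)
        = if a = b then 0
          else (1 / ((q : ℝ) + 1)) * ((1 / (lam + 1)) * u e) := by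
      intro b
      by_cases hab : a = b
      · simp [hab]
      · simp only [hab, if_false, ite_mul, zero_mul]
        rw [Finset.sum_ite_eq]
        simp
    have houter : ∑ b : Fin q, ∑ f : Fin m,
        (if a = b then 0 else if e = f then (1 / ((q : ℝ) + 1)) else 0)
          * ((1 / (lam + 1)) * u f)
        = ((q : ℝ) - 1) * ((1 / ((q : ℝ) + 1)) * ((1 / (lam + 1)) * u e)) := by
      rw [Finset.sum_congr rfl (fun b (_ : b ∈ Finset.univ) => hinner b)]
      have hsplit : ∀ b : Fin q,
          (if a = b then (0:ℝ)
            else (1 / ((q : ℝ) + 1)) * ((1 / (lam + 1)) * u e))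
          = (1 / ((q : ℝ) + 1)) * ((1 / (lam + 1)) * u e)
            - (if a = b then (1 / ((q : ℝ) + 1)) * ((1 / (lam + 1)) * u e)
               else 0) := by
        intro b; split <;> ring
      rw [Finset.sum_congr rfl (fun b (_ : b ∈ Finset.univ) => hsplit b),
        Finset.sum_sub_distrib, Finset.sum_const, Finset.sum_ite_eq,
        Finset.card_univ, Fintype.card_fin]
      simp only [Finset.mem_univ, if_true, nsmul_eq_mul]
      ring
    rw [expand, hsum1, houter]
    simp only [Pi.smul_apply, hw2, smul_eq_mul]
    field_simp
    ring
end

section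
/- With P_{g+1} the block matrix defined from P_g, B_g, D_g as in the edge corona construction, if P_g v = λ v, then the vector w with top block v and each of the q lower blocks equal to −(1/q) B_gᵀ D_g^{-1/2} v satisfies P_{g+1} w = (−1/(q+1)) w. -/
open Matrix

/-- Edge corona spectral lemma, eigenvalue `−1/(q+1)`: if `P_g v = λ v`,
then the vector with top block `v` and all `q` lower blocks `−(1/q) B_gᵀ D_g^{-1/2} v`
is an eigenvector of the block matrix `P_{g+1}` with eigenvalue `−1/(q+1)`. -/
theorem edge_corona_eigen_neg (n m q : ℕ) (hq : 1 ≤ q)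
    (A : Matrix (Fin n) (Fin n) ℝ) (d : Fin n → ℝ) (hd : ∀ i, 0 < d i)
    (B : Matrix (Fin n) (Fin m) ℝ)
    (hBB : B * Bᵀ = A + Matrix.diagonal d)
    (Pg : Matrix (Fin n) (Fin n) ℝ)
    (hPg : Pg = Matrix.diagonal (fun i => (Real.sqrt (d i))⁻¹) * A *
      Matrix.diagonal (fun i => (Real.sqrt (d i))⁻¹))
    (Pnew : Matrix (Fin n ⊕ Fin q × Fin m) (Fin n ⊕ Fin q × Fin m) ℝ)
    (hP11 : ∀ i j, Pnew (Sum.inl i) (Sum.inl j) = (1 / ((q : ℝ) + 1)) * Pg i j)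
    (hP12 : ∀ i a e, Pnew (Sum.inl i) (Sum.inr (a, e))
      = (1 / ((q : ℝ) + 1)) * ((Real.sqrt (d i))⁻¹ * B i e))
    (hP21 : ∀ a e j, Pnew (Sum.inr (a, e)) (Sum.inl j)
      = (1 / ((q : ℝ) + 1)) * (B j e * (Real.sqrt (d j))⁻¹))
    (hP22 : ∀ a e b f, Pnew (Sum.inr (a, e)) (Sum.inr (b, f))
      = if a = b then 0 else if e = f then (1 / ((q : ℝ) + 1)) else 0)
    (lam : ℝ)
    (v : Fin n → ℝ) (hv : Pg.mulVec v = lam • v)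
    (w : (Fin n ⊕ Fin q × Fin m) → ℝ)
    (hw1 : ∀ i, w (Sum.inl i) = v i)
    (hw2 : ∀ a e, w (Sum.inr (a, e)) = (-(1 / (q : ℝ))) *
      (Bᵀ.mulVec ((Matrix.diagonal (fun i => (Real.sqrt (d i))⁻¹)).mulVec v)) e) :
    Pnew.mulVec w = (-(1 / ((q : ℝ) + 1))) • w := by
  have hq' : (q : ℝ) ≠ 0 := Nat.cast_ne_zero.2 (by omega)
  have hq1 : (q : ℝ) + 1 ≠ 0 := by positivity
  set S : Matrix (Fin n) (Fin n) ℝ :=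
    Matrix.diagonal (fun i => (Real.sqrt (d i))⁻¹) with hS
  set u : Fin m → ℝ := Bᵀ.mulVec (S.mulVec v) with hu
  have hv' : ∀ i, ∑ j, Pg i j * v j = lam * v i := by
    intro i
    have := congrFun hv i
    simpa [Matrix.mulVec, dotProduct] using this
  have hSS : S * Matrix.diagonal d * S = 1 := by
    rw [hS, Matrix.diagonal_mul_diagonal, Matrix.diagonal_mul_diagonal]
    have hfun : (fun i => (Real.sqrt (d i))⁻¹ * d i * (Real.sqrt (d i))⁻¹)
        = fun _ : Fin n => (1:ℝ) := by
      funext i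
      have h2 : Real.sqrt (d i) * Real.sqrt (d i) = d i := Real.mul_self_sqrt (hd i).le
      have h3 : Real.sqrt (d i) ≠ 0 := ne_of_gt (Real.sqrt_pos.2 (hd i))
      rw [← h2]
      field_simp
      rw [Real.sqrt_sq (Real.sqrt_nonneg _)]
    rw [hfun, Matrix.diagonal_one]
  have hM : S * (B * Bᵀ) * S = Pg + 1 := by
    rw [hBB, Matrix.mul_add, Matrix.add_mul, hSS, hPg]
  have hu' : ∀ e, u e = ∑ j, B j e * ((Real.sqrt (d j))⁻¹ * v j) := by
    intro e
    simp [hu, hS, Matrix.mulVec, dotProduct, Matrix.mulVec_diagonal, mul_assoc]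
  have hkey : ∀ i, ∑ e, (Real.sqrt (d i))⁻¹ * B i e * u e = lam * v i + v i := by
    intro i
    have h1 : ∑ e, (Real.sqrt (d i))⁻¹ * B i e * u e = ((S * B).mulVec u) i := by
      simp [Matrix.mulVec, dotProduct, hS, Matrix.diagonal_mul, mul_assoc]
    have h2 : (S * B).mulVec u = (Pg + 1).mulVec v := by
      rw [hu, Matrix.mulVec_mulVec, Matrix.mulVec_mulVec, ← hM]
      simp [Matrix.mul_assoc]
    rw [h1, h2, Matrix.add_mulVec, Matrix.one_mulVec]
    simp [hv]
  funext x
  cases x with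
  | inl i =>
    have hsum : (Pnew.mulVec w) (Sum.inl i)
        = ∑ j, Pnew (Sum.inl i) (Sum.inl j) * w (Sum.inl j)
          + ∑ a : Fin q, ∑ e : Fin m,
              Pnew (Sum.inl i) (Sum.inr (a, e)) * w (Sum.inr (a, e)) := by
      simp [Matrix.mulVec, dotProduct, Fintype.sum_sum_type, Fintype.sum_prod_type]
    rw [hsum]
    have e1 : ∑ j, Pnew (Sum.inl i) (Sum.inl j) * w (Sum.inl j)
        = (1 / ((q : ℝ) + 1)) * (lam * v i) := by
      simp only [hP11, hw1, mul_assoc]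
      rw [← Finset.mul_sum, hv' i]
    have e2 : ∑ a : Fin q, ∑ e : Fin m,
        Pnew (Sum.inl i) (Sum.inr (a, e)) * w (Sum.inr (a, e))
        = (q : ℝ) * ((1 / ((q : ℝ) + 1)) * ((-(1 / (q : ℝ))) * (lam * v i + v i))) := by
      have inner : ∀ a : Fin q, ∑ e : Fin m,
          Pnew (Sum.inl i) (Sum.inr (a, e)) * w (Sum.inr (a, e))
          = (1 / ((q : ℝ) + 1)) * ((-(1 / (q : ℝ))) * (lam * v i + v i)) := by
        intro a
        have : ∑ e : Fin m, Pnew (Sum.inl i) (Sum.inr (a, e)) * w (Sum.inr (a, e))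
            = (1 / ((q : ℝ) + 1)) * ((-(1 / (q : ℝ)))
                * ∑ e, (Real.sqrt (d i))⁻¹ * B i e * u e) := by
          rw [Finset.mul_sum, Finset.mul_sum]
          refine Finset.sum_congr rfl fun e _ => ?_
          rw [hP12, hw2]
          ring
        rw [this, hkey i]
      rw [Finset.sum_congr rfl fun a _ => inner a]
      simp [Finset.sum_const, Finset.card_univ]
    rw [e1, e2, Pi.smul_apply, hw1, smul_eq_mul]
    field_simp
    ring
  | inr p =>
    obtain ⟨a, e⟩ := p
    have hsum : (Pnew.mulVec w) (Sum.inr (a, e))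
        = ∑ j, Pnew (Sum.inr (a, e)) (Sum.inl j) * w (Sum.inl j)
          + ∑ b : Fin q, ∑ f : Fin m,
              Pnew (Sum.inr (a, e)) (Sum.inr (b, f)) * w (Sum.inr (b, f)) := by
      simp [Matrix.mulVec, dotProduct, Fintype.sum_sum_type, Fintype.sum_prod_type]
    rw [hsum]
    have e1 : ∑ j, Pnew (Sum.inr (a, e)) (Sum.inl j) * w (Sum.inl j)
        = (1 / ((q : ℝ) + 1)) * u e := by
      rw [hu' e, Finset.mul_sum]
      refine Finset.sum_congr rfl fun j _ => ?_
      rw [hP21, hw1]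
      ring
    have e2 : ∑ b : Fin q, ∑ f : Fin m,
        Pnew (Sum.inr (a, e)) (Sum.inr (b, f)) * w (Sum.inr (b, f))
        = ((q : ℝ) - 1) * ((1 / ((q : ℝ) + 1)) * ((-(1 / (q : ℝ))) * u e)) := by
      have inner : ∀ b : Fin q, ∑ f : Fin m,
          Pnew (Sum.inr (a, e)) (Sum.inr (b, f)) * w (Sum.inr (b, f))
          = if a = b then 0 else (1 / ((q : ℝ) + 1)) * ((-(1 / (q : ℝ))) * u e) := by
        intro b
        by_cases hab : a = b
        · simp [hP22, hab]
        · simp only [hP22, if_neg hab]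
          rw [Finset.sum_eq_single e]
          · rw [if_pos rfl, hw2]
          · intro f _ hf
            rw [if_neg (fun h => hf h.symm), zero_mul]
          · intro h; exact absurd (Finset.mem_univ e) h
      rw [Finset.sum_congr rfl fun b _ => inner b]
      have hsplit : ∀ b : Fin q,
          (if a = b then (0:ℝ) else (1 / ((q : ℝ) + 1)) * ((-(1 / (q : ℝ))) * u e))
          = (1 / ((q : ℝ) + 1)) * ((-(1 / (q : ℝ))) * u e)
            - (if a = b then (1 / ((q : ℝ) + 1)) * ((-(1 / (q : ℝ))) * u e) else 0) := by
        intro b; split <;> ring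
      rw [Finset.sum_congr rfl fun b _ => hsplit b, Finset.sum_sub_distrib,
        Finset.sum_const, Finset.sum_ite_eq, if_pos (Finset.mem_univ a),
        Finset.card_univ, Fintype.card_fin, nsmul_eq_mul]
      ring
    rw [e1, e2, Pi.smul_apply, hw2, smul_eq_mul]
    field_simp
    ring
end

section
/- With P_{g+1} the block matrix defined from P_g, B_g, D_g as in the edge corona construction, if X ∈ ℝ^m satisfies B_g X = 0, then the vector w with top block 0 and each of the q lower blocks equal to X satisfies P_{g+1} w = ((q−1)/(q+1)) w. -/
open Matrix

/-- Edge corona spectral lemma, eigenvalue `(q−1)/(q+1)`: if `X ∈ ℝ^m` satisfies `B_g X = 0`,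
then the vector with top block `0` and all `q` lower blocks `X` is an eigenvector of the
block matrix `P_{g+1}` with eigenvalue `(q−1)/(q+1)`. -/
theorem edge_corona_eigen_kernel (n m q : ℕ) (hq : 1 ≤ q)
    (A : Matrix (Fin n) (Fin n) ℝ) (d : Fin n → ℝ) (hd : ∀ i, 0 < d i)
    (B : Matrix (Fin n) (Fin m) ℝ)
    (hBB : B * Bᵀ = A + Matrix.diagonal d)
    (Pg : Matrix (Fin n) (Fin n) ℝ)
    (hPg : Pg = Matrix.diagonal (fun i => (Real.sqrt (d i))⁻¹) * A *
      Matrix.diagonal (fun i => (Real.sqrt (d i))⁻¹))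
    (Pnew : Matrix (Fin n ⊕ Fin q × Fin m) (Fin n ⊕ Fin q × Fin m) ℝ)
    (hP11 : ∀ i j, Pnew (Sum.inl i) (Sum.inl j) = (1 / ((q : ℝ) + 1)) * Pg i j)
    (hP12 : ∀ i a e, Pnew (Sum.inl i) (Sum.inr (a, e))
      = (1 / ((q : ℝ) + 1)) * ((Real.sqrt (d i))⁻¹ * B i e))
    (hP21 : ∀ a e j, Pnew (Sum.inr (a, e)) (Sum.inl j)
      = (1 / ((q : ℝ) + 1)) * (B j e * (Real.sqrt (d j))⁻¹))
    (hP22 : ∀ a e b f, Pnew (Sum.inr (a, e)) (Sum.inr (b, f))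
      = if a = b then 0 else if e = f then (1 / ((q : ℝ) + 1)) else 0)
    (X : Fin m → ℝ) (hX : B.mulVec X = 0)
    (w : (Fin n ⊕ Fin q × Fin m) → ℝ)
    (hw1 : ∀ i, w (Sum.inl i) = 0)
    (hw2 : ∀ a e, w (Sum.inr (a, e)) = X e) :
    Pnew.mulVec w = (((q : ℝ) - 1) / ((q : ℝ) + 1)) • w := by
  funext x
  have hBX : ∀ i, ∑ e, B i e * X e = 0 := fun i => congrFun hX i
  have hq1 : ((q:ℝ) + 1) ≠ 0 := by positivity
  cases x with
  | inl i =>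
    simp only [mulVec, dotProduct, Fintype.sum_sum_type, Pi.smul_apply, hw1,
      smul_eq_mul, mul_zero, Finset.sum_const_zero, zero_add]
    calc ∑ p : Fin q × Fin m, Pnew (Sum.inl i) (Sum.inr p) * w (Sum.inr p)
        = ∑ p : Fin q × Fin m, 1/((q:ℝ)+1) * ((Real.sqrt (d i))⁻¹ * (B i p.2 * X p.2)) := by
          refine Finset.sum_congr rfl fun p _ => ?_
          rw [show p = (p.1, p.2) from rfl, hP12, hw2]; ring
      _ = ∑ _a : Fin q, ∑ e : Fin m, 1/((q:ℝ)+1) * ((Real.sqrt (d i))⁻¹ * (B i e * X e)) := by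
          rw [Fintype.sum_prod_type]
      _ = 0 := by simp [← Finset.mul_sum, hBX i]
  | inr p =>
    rcases p with ⟨a, e⟩
    simp only [mulVec, dotProduct, Fintype.sum_sum_type, Pi.smul_apply, hw1,
      smul_eq_mul, mul_zero, Finset.sum_const_zero, zero_add, hw2]
    calc ∑ p : Fin q × Fin m, Pnew (Sum.inr (a, e)) (Sum.inr p) * X p.2
        = ∑ b : Fin q, ∑ f : Fin m,
            (if a = b then (0:ℝ) else if e = f then 1/((q:ℝ)+1) else 0) * X f := by
          rw [Fintype.sum_prod_type]
          exact Finset.sum_congr rfl fun b _ => Finset.sum_congr rfl fun f _ => by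
            rw [hP22]
      _ = ∑ b : Fin q, (if a = b then (0:ℝ) else 1/((q:ℝ)+1) * X e) := by
          refine Finset.sum_congr rfl fun b _ => ?_
          by_cases h : a = b
          · simp [h]
          · simp [h, ite_mul, Finset.sum_ite_eq]
      _ = ∑ _b : Fin q, 1/((q:ℝ)+1) * X e
            - ∑ b : Fin q, (if a = b then 1/((q:ℝ)+1) * X e else 0) := by
          rw [← Finset.sum_sub_distrib]
          refine Finset.sum_congr rfl fun b _ => ?_
          by_cases h : a = b <;> simp [h]
      _ = (q:ℝ) * (1/((q:ℝ)+1) * X e) - 1/((q:ℝ)+1) * X e := by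
          rw [Finset.sum_const, Finset.sum_ite_eq]
          simp
      _ = ((q:ℝ) - 1) / ((q:ℝ) + 1) * X e := by field_simp
end

section
/- With P_{g+1} the block matrix defined from P_g, B_g, D_g as in the edge corona construction, if Y = (Y_1,...,Y_q) with each Y_i ∈ ℝ^m and Y_1 + Y_2 + ... + Y_q = 0, then the vector w with top block 0 and lower blocks Y_1,...,Y_q satisfies P_{g+1} w = (−1/(q+1)) w. -/
/-!
On the vectors `(0, Y)` the block `P₁₁` never acts, the block `P₁₂` is constant along the
`q` copies and so sees only `Y₁ + ⋯ + Y_q = 0`, and `P₂₂ = (J_q - I_q) ⊗ I_m / (q + 1)`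
sends `Y` to `(∑ Y_b - Y_a)/(q + 1) = -Y_a/(q + 1)`.
-/

open Matrix

namespace Matrix

variable {ι κ μ R : Type*} [Fintype κ] [Fintype μ]

theorem mulVec_eq_zero_of_sum_fst_eq_zero [NonUnitalNonAssocSemiring R]
    (M : Matrix ι (κ × μ) R) (N : Matrix ι μ R) (hM : ∀ i a e, M i (a, e) = N i e)
    (y : κ × μ → R) (hy : ∀ e, ∑ a, y (a, e) = 0) : M *ᵥ y = 0 := by
  funext i
  simp only [mulVec, dotProduct, Fintype.sum_prod_type_right, hM, ← Finset.mul_sum, hy,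
    mul_zero, Finset.sum_const_zero, Pi.zero_apply]

theorem mulVec_eq_neg_smul_of_sum_fst_eq_zero [DecidableEq κ] [DecidableEq μ]
    [NonUnitalNonAssocRing R] (M : Matrix (κ × μ) (κ × μ) R) (c : R)
    (hM : ∀ a e b f, M (a, e) (b, f) = if a = b then 0 else if e = f then c else 0)
    (y : κ × μ → R) (hy : ∀ e, ∑ a, y (a, e) = 0) : M *ᵥ y = -c • y := by
  funext ⟨a, e⟩
  have hrow : ∀ b, ∑ f, M (a, e) (b, f) * y (b, f) = if a = b then 0 else c * y (b, e) := by
    intro b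
    split_ifs with hab <;> simp [hM, hab]
  calc (M *ᵥ y) (a, e) = ∑ b ∈ Finset.univ.erase a, c * y (b, e) := by
        simp only [mulVec, dotProduct, Fintype.sum_prod_type, hrow]
        rw [Finset.sum_ite, Finset.sum_const_zero, zero_add, Finset.filter_ne]
    _ = (-c • y) (a, e) := by
        rw [← Finset.mul_sum, Finset.sum_erase_eq_sub (Finset.mem_univ a), hy]
        simp

end Matrix

theorem edge_corona_eigen_sum_zero_general (n m q : ℕ)
    (d : Fin n → ℝ)
    (B : Matrix (Fin n) (Fin m) ℝ)
    (Pnew : Matrix (Fin n ⊕ Fin q × Fin m) (Fin n ⊕ Fin q × Fin m) ℝ)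
    (hP12 : ∀ i a e, Pnew (Sum.inl i) (Sum.inr (a, e))
      = (1 / ((q : ℝ) + 1)) * ((Real.sqrt (d i))⁻¹ * B i e))
    (hP22 : ∀ a e b f, Pnew (Sum.inr (a, e)) (Sum.inr (b, f))
      = if a = b then 0 else if e = f then (1 / ((q : ℝ) + 1)) else 0)
    (Y : Fin q → Fin m → ℝ) (hY : ∀ e, ∑ a, Y a e = 0)
    (w : (Fin n ⊕ Fin q × Fin m) → ℝ)
    (hw1 : ∀ i, w (Sum.inl i) = 0)
    (hw2 : ∀ a e, w (Sum.inr (a, e)) = Y a e) :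
    Pnew.mulVec w = (-(1 / ((q : ℝ) + 1))) • w := by
  have htop : w ∘ Sum.inl = 0 := funext hw1
  have hcol : ∀ e, ∑ a, (w ∘ Sum.inr) (a, e) = 0 := by simpa [hw2] using hY
  rw [← fromBlocks_toBlocks Pnew, fromBlocks_mulVec, htop, mulVec_zero, mulVec_zero, zero_add,
    zero_add, mulVec_eq_zero_of_sum_fst_eq_zero _ _ hP12 _ hcol,
    mulVec_eq_neg_smul_of_sum_fst_eq_zero _ _ hP22 _ hcol]
  ext (i | p) <;> simp [hw1]

/-- Edge corona spectral lemma, eigenvalue `−1/(q+1)` from block-sum-zero vectors: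
if `Y = (Y_1, …, Y_q)` with `Y_1 + ⋯ + Y_q = 0`, then the vector with top block `0`
and lower blocks `Y_1, …, Y_q` is an eigenvector of the block matrix `P_{g+1}`
with eigenvalue `−1/(q+1)`. -/
theorem edge_corona_eigen_sum_zero (n m q : ℕ) (hq : 2 ≤ q)
    (A : Matrix (Fin n) (Fin n) ℝ) (d : Fin n → ℝ) (hd : ∀ i, 0 < d i)
    (B : Matrix (Fin n) (Fin m) ℝ)
    (hBB : B * Bᵀ = A + Matrix.diagonal d)
    (Pg : Matrix (Fin n) (Fin n) ℝ)
    (hPg : Pg = Matrix.diagonal (fun i => (Real.sqrt (d i))⁻¹) * A *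
      Matrix.diagonal (fun i => (Real.sqrt (d i))⁻¹))
    (Pnew : Matrix (Fin n ⊕ Fin q × Fin m) (Fin n ⊕ Fin q × Fin m) ℝ)
    (hP11 : ∀ i j, Pnew (Sum.inl i) (Sum.inl j) = (1 / ((q : ℝ) + 1)) * Pg i j)
    (hP12 : ∀ i a e, Pnew (Sum.inl i) (Sum.inr (a, e))
      = (1 / ((q : ℝ) + 1)) * ((Real.sqrt (d i))⁻¹ * B i e))
    (hP21 : ∀ a e j, Pnew (Sum.inr (a, e)) (Sum.inl j)
      = (1 / ((q : ℝ) + 1)) * (B j e * (Real.sqrt (d j))⁻¹))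
    (hP22 : ∀ a e b f, Pnew (Sum.inr (a, e)) (Sum.inr (b, f))
      = if a = b then 0 else if e = f then (1 / ((q : ℝ) + 1)) else 0)
    (Y : Fin q → Fin m → ℝ) (hY : ∀ e, ∑ a, Y a e = 0)
    (w : (Fin n ⊕ Fin q × Fin m) → ℝ)
    (hw1 : ∀ i, w (Sum.inl i) = 0)
    (hw2 : ∀ a e, w (Sum.inr (a, e)) = Y a e) :
    Pnew.mulVec w = (-(1 / ((q : ℝ) + 1))) • w :=
  edge_corona_eigen_sum_zero_general n m q d B Pnew hP12 hP22 Y hY w hw1 hw2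
end

section
/- Fix an integer q ≥ 1 and define H_g and N_g by the closed forms: N_g = (2/(q+3))((q+1)(q+2)/2)^{g+1} + 2(q+2)/(q+3), and H_g = ((q+1)(q+2)²(q³+8q²+15q+8)/((q+3)²(q²+5q+8)))((q+1)(q+2)/2)^{2g} + ((q+4)(3q+7)(q+2)²(q+1)³/(2(q+3)²(q²+5q+8)))((q+1)(q+2)/2)^{3g} − ((q+2)(q+4)(q+1)³/(2(q+3)²))((q+2)²(q+1)³/4)^g + ((q+2)(q²+9q+20)(q+1)³/((q+3)²(q²+5q+8)))((q+2)(q+1)²/2)^g + (2(q+2)(q+1)²(q+4)²/((q+3)²(q²+5q+8)))(q+1)^g − ((q+2)(q+1)²/(q+3)²)((q+1)(q+2)/2)^g. Then the mean hitting time H_g/(N_g(N_g−1)) divided by N_g converges as g → ∞, and lim_{g→∞} H_g/(N_g²(N_g−1)) = (q+3)(q+4)(3q+7)/(2(q+2)(q²+5q+8)). -/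
open Filter

set_option maxHeartbeats 1600000 in
/-- The mean hitting time `H_g/(N_g(N_g−1))` of the simplicial network `G_q(g)` grows
linearly in `N_g`: `H_g/(N_g²(N_g−1))` converges to
`(q+3)(q+4)(3q+7)/(2(q+2)(q²+5q+8))` as `g → ∞`. -/
theorem mean_hitting_time_limit (q : ℕ) (hq : 1 ≤ q) (H N : ℕ → ℝ)
    (hN : ∀ g, N g = (2 / ((q : ℝ) + 3)) * ((((q : ℝ) + 1) * ((q : ℝ) + 2) / 2)) ^ (g + 1)
      + 2 * ((q : ℝ) + 2) / ((q : ℝ) + 3))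
    (hH : ∀ g, H g
      = (((q : ℝ) + 1) * ((q : ℝ) + 2) ^ 2
            * ((q : ℝ) ^ 3 + 8 * (q : ℝ) ^ 2 + 15 * (q : ℝ) + 8)
          / (((q : ℝ) + 3) ^ 2 * ((q : ℝ) ^ 2 + 5 * (q : ℝ) + 8)))
        * ((((q : ℝ) + 1) * ((q : ℝ) + 2) / 2)) ^ (2 * g)
      + (((q : ℝ) + 4) * (3 * (q : ℝ) + 7) * ((q : ℝ) + 2) ^ 2 * ((q : ℝ) + 1) ^ 3
          / (2 * ((q : ℝ) + 3) ^ 2 * ((q : ℝ) ^ 2 + 5 * (q : ℝ) + 8)))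
        * ((((q : ℝ) + 1) * ((q : ℝ) + 2) / 2)) ^ (3 * g)
      - (((q : ℝ) + 2) * ((q : ℝ) + 4) * ((q : ℝ) + 1) ^ 3 / (2 * ((q : ℝ) + 3) ^ 2))
        * ((((q : ℝ) + 2) ^ 2 * ((q : ℝ) + 1) ^ 3 / 4)) ^ g
      + (((q : ℝ) + 2) * ((q : ℝ) ^ 2 + 9 * (q : ℝ) + 20) * ((q : ℝ) + 1) ^ 3
          / (((q : ℝ) + 3) ^ 2 * ((q : ℝ) ^ 2 + 5 * (q : ℝ) + 8)))
        * ((((q : ℝ) + 2) * ((q : ℝ) + 1) ^ 2 / 2)) ^ g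
      + (2 * ((q : ℝ) + 2) * ((q : ℝ) + 1) ^ 2 * ((q : ℝ) + 4) ^ 2
          / (((q : ℝ) + 3) ^ 2 * ((q : ℝ) ^ 2 + 5 * (q : ℝ) + 8)))
        * ((q : ℝ) + 1) ^ g
      - (((q : ℝ) + 2) * ((q : ℝ) + 1) ^ 2 / ((q : ℝ) + 3) ^ 2)
        * ((((q : ℝ) + 1) * ((q : ℝ) + 2) / 2)) ^ g) :
    Tendsto (fun g => H g / ((N g) ^ 2 * (N g - 1))) atTop
      (nhds (((q : ℝ) + 3) * ((q : ℝ) + 4) * (3 * (q : ℝ) + 7)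
        / (2 * ((q : ℝ) + 2) * ((q : ℝ) ^ 2 + 5 * (q : ℝ) + 8)))) := by

  have hQ1 : (1:ℝ) ≤ (q:ℝ) := by exact_mod_cast hq
  set Q : ℝ := (q:ℝ) with hQdef
  set r : ℝ := (Q + 1) * (Q + 2) / 2 with hrdef
  have hr3 : (3:ℝ) ≤ r := by rw [hrdef]; nlinarith
  have hr0 : (0:ℝ) < r := by linarith
  have hrne : r ≠ 0 := ne_of_gt hr0
  have hQ3 : (Q:ℝ) + 3 ≠ 0 := by positivity
  have hQ2 : (Q:ℝ) + 2 ≠ 0 := by positivity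
  have hden : (Q:ℝ) ^ 2 + 5 * Q + 8 ≠ 0 := by positivity
  -- vanishing powers
  have hpow : ∀ x : ℝ, 0 ≤ x → x < 1 →
      Tendsto (fun g : ℕ => x ^ g) atTop (nhds 0) := fun x h0 h1 =>
    tendsto_pow_atTop_nhds_zero_of_lt_one h0 h1
  have hQ1r : Q + 1 < r := by rw [hrdef]; nlinarith
  have hQ0 : (0:ℝ) ≤ Q := by linarith
  -- abbreviations for coefficients
  set A1 : ℝ := (Q + 1) * (Q + 2) ^ 2 * (Q ^ 3 + 8 * Q ^ 2 + 15 * Q + 8)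
      / ((Q + 3) ^ 2 * (Q ^ 2 + 5 * Q + 8)) with hA1
  set A2 : ℝ := (Q + 4) * (3 * Q + 7) * (Q + 2) ^ 2 * (Q + 1) ^ 3
      / (2 * (Q + 3) ^ 2 * (Q ^ 2 + 5 * Q + 8)) with hA2
  set A3 : ℝ := (Q + 2) * (Q + 4) * (Q + 1) ^ 3 / (2 * (Q + 3) ^ 2) with hA3
  set A4 : ℝ := (Q + 2) * (Q ^ 2 + 9 * Q + 20) * (Q + 1) ^ 3
      / ((Q + 3) ^ 2 * (Q ^ 2 + 5 * Q + 8)) with hA4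
  set A5 : ℝ := 2 * (Q + 2) * (Q + 1) ^ 2 * (Q + 4) ^ 2
      / ((Q + 3) ^ 2 * (Q ^ 2 + 5 * Q + 8)) with hA5
  set A6 : ℝ := (Q + 2) * (Q + 1) ^ 2 / (Q + 3) ^ 2 with hA6
  clear_value A6 A5 A4 A3 A2 A1 r Q
  -- the key pointwise decomposition of the numerator
  have hHdiv : ∀ g : ℕ, H g / (r ^ 3) ^ g =
      A2 + A1 * (r ^ 2 / r ^ 3) ^ g - A3 * ((Q + 1) * r ^ 2 / r ^ 3) ^ g
        + A4 * ((Q + 1) * r / r ^ 3) ^ g + A5 * ((Q + 1) / r ^ 3) ^ g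
        - A6 * (r / r ^ 3) ^ g := by
    intro g
    have e1 : r ^ (2 * g) = (r ^ 2) ^ g := by rw [pow_mul]
    have e2 : r ^ (3 * g) = (r ^ 3) ^ g := by rw [pow_mul]
    have e3 : ((Q + 2) ^ 2 * (Q + 1) ^ 3 / 4) = (Q + 1) * r ^ 2 := by
      rw [hrdef]; ring
    have e4 : ((Q + 2) * (Q + 1) ^ 2 / 2) = (Q + 1) * r := by
      rw [hrdef]; ring
    have hrg : (r ^ 3) ^ g ≠ 0 := pow_ne_zero _ (by positivity)
    rw [hH g, e1, e2, e3, e4]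
    simp only [div_pow]
    field_simp
    ring
  -- limit of the numerator quotient
  have hnum : Tendsto (fun g : ℕ => H g / (r ^ 3) ^ g) atTop (nhds A2) := by
    have hsq : (0:ℝ) < r ^ 2 := by positivity
    have hltr2 : r < r ^ 2 := by nlinarith [mul_le_mul_of_nonneg_left hr3 hr0.le]
    have hlt1 : r ^ 2 < r ^ 3 := by nlinarith [mul_lt_mul_of_pos_left hltr2 hr0]
    have hlt2 : (Q + 1) * r ^ 2 < r ^ 3 := by nlinarith [mul_lt_mul_of_pos_left hQ1r hsq]
    have hlt3 : (Q + 1) * r < r ^ 3 := by nlinarith [mul_lt_mul_of_pos_right hQ1r hr0, hlt1]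
    have hlt4 : (Q + 1) < r ^ 3 := by linarith
    have hlt5 : r < r ^ 3 := by linarith
    have hb1 : Tendsto (fun g : ℕ => (r ^ 2 / r ^ 3) ^ g) atTop (nhds 0) := by
      apply hpow _ (by positivity)
      rw [div_lt_one (by positivity)]; exact hlt1
    have hb2 : Tendsto (fun g : ℕ => ((Q + 1) * r ^ 2 / r ^ 3) ^ g) atTop (nhds 0) := by
      apply hpow _ (by positivity)
      rw [div_lt_one (by positivity)]; exact hlt2
    have hb3 : Tendsto (fun g : ℕ => ((Q + 1) * r / r ^ 3) ^ g) atTop (nhds 0) := by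
      apply hpow _ (by positivity)
      rw [div_lt_one (by positivity)]; exact hlt3
    have hb4 : Tendsto (fun g : ℕ => ((Q + 1) / r ^ 3) ^ g) atTop (nhds 0) := by
      apply hpow _ (by positivity)
      rw [div_lt_one (by positivity)]; exact hlt4
    have hb5 : Tendsto (fun g : ℕ => (r / r ^ 3) ^ g) atTop (nhds 0) := by
      apply hpow _ (by positivity)
      rw [div_lt_one (by positivity)]; exact hlt5
    have hsum : Tendsto (fun g : ℕ =>
        A2 + A1 * (r ^ 2 / r ^ 3) ^ g - A3 * ((Q + 1) * r ^ 2 / r ^ 3) ^ g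
          + A4 * ((Q + 1) * r / r ^ 3) ^ g + A5 * ((Q + 1) / r ^ 3) ^ g
          - A6 * (r / r ^ 3) ^ g) atTop
        (nhds (A2 + A1 * 0 - A3 * 0 + A4 * 0 + A5 * 0 - A6 * 0)) :=
      ((((tendsto_const_nhds.add (hb1.const_mul A1)).sub
        (hb2.const_mul A3)).add (hb3.const_mul A4)).add
        (hb4.const_mul A5)).sub (hb5.const_mul A6)
    simp only [mul_zero, add_zero, sub_zero] at hsum
    exact hsum.congr (fun g => (hHdiv g).symm)
  -- limit of N g / r ^ g
  set c1 : ℝ := 2 / (Q + 3) with hc1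
  set c2 : ℝ := 2 * (Q + 2) / (Q + 3) with hc2
  clear_value c2 c1
  have hNg : ∀ g : ℕ, N g / r ^ g = c1 * r + c2 * (1 / r) ^ g := by
    intro g
    have hrg : r ^ g ≠ 0 := pow_ne_zero _ hrne
    rw [hN g, pow_succ]
    field_simp
    rw [one_div, inv_pow]
    linear_combination (-c2) * (mul_inv_cancel₀ hrg)
  have hNg1 : ∀ g : ℕ, (N g - 1) / r ^ g = c1 * r + (c2 - 1) * (1 / r) ^ g := by
    intro g
    have hrg : r ^ g ≠ 0 := pow_ne_zero _ hrne
    have := hNg g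
    rw [div_eq_iff hrg] at this ⊢
    rw [sub_mul, this]
    field_simp
    rw [one_div, inv_pow]
    linear_combination (mul_inv_cancel₀ hrg)
  have hinv : Tendsto (fun g : ℕ => (1 / r) ^ g) atTop (nhds 0) := by
    apply hpow _ (by positivity)
    rw [div_lt_one hr0]; linarith
  have hNlim : Tendsto (fun g : ℕ => N g / r ^ g) atTop (nhds (c1 * r)) := by
    have hsum : Tendsto (fun g : ℕ => c1 * r + c2 * (1 / r) ^ g) atTop
        (nhds (c1 * r + c2 * 0)) := tendsto_const_nhds.add (hinv.const_mul c2)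
    simp only [mul_zero, add_zero] at hsum
    exact hsum.congr (fun g => (hNg g).symm)
  have hN1lim : Tendsto (fun g : ℕ => (N g - 1) / r ^ g) atTop (nhds (c1 * r)) := by
    have hsum : Tendsto (fun g : ℕ => c1 * r + (c2 - 1) * (1 / r) ^ g) atTop
        (nhds (c1 * r + (c2 - 1) * 0)) := tendsto_const_nhds.add (hinv.const_mul (c2 - 1))
    simp only [mul_zero, add_zero] at hsum
    exact hsum.congr (fun g => (hNg1 g).symm)
  have hden2 : Tendsto (fun g : ℕ => (N g / r ^ g) ^ 2 * ((N g - 1) / r ^ g)) atTop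
      (nhds ((c1 * r) ^ 2 * (c1 * r))) := (hNlim.pow 2).mul hN1lim
  have hc1r : (0:ℝ) < c1 * r := by
    have h3 : (0:ℝ) < Q + 3 := by linarith
    have : (0:ℝ) < c1 := by rw [hc1]; exact div_pos (by norm_num) h3
    exact mul_pos this hr0
  have hBne : (c1 * r) ^ 2 * (c1 * r) ≠ 0 :=
    ne_of_gt (mul_pos (pow_pos hc1r 2) hc1r)
  have hmain := hnum.div hden2 hBne
  have heq : ∀ g : ℕ, H g / (r ^ 3) ^ g / ((N g / r ^ g) ^ 2 * ((N g - 1) / r ^ g)) =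
      H g / ((N g) ^ 2 * (N g - 1)) := by
    intro g
    have hrg : r ^ g ≠ 0 := pow_ne_zero _ hrne
    rcases eq_or_ne ((N g) ^ 2 * (N g - 1)) 0 with h0 | h0
    · rcases mul_eq_zero.mp h0 with h | h
      · have : N g = 0 := by
          have := pow_eq_zero_iff (n := 2) (by norm_num) |>.mp h
          exact this
        simp [this, h0]
      · simp [h, h0]
    · have h1 : (N g / r ^ g) ^ 2 * ((N g - 1) / r ^ g) ≠ 0 := by
        rw [div_pow, div_mul_div_comm]
        apply div_ne_zero h0
        positivity
      field_simp
      have hp : (r ^ g) ^ 2 * r ^ g = (r ^ 3) ^ g := by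
        rw [← pow_mul, ← pow_add, ← pow_mul]
        congr 1
        omega
      rw [← hp]
      ring
  have hfinal := hmain.congr heq
  have hval : A2 / ((c1 * r) ^ 2 * (c1 * r)) =
      (Q + 3) * (Q + 4) * (3 * Q + 7) / (2 * (Q + 2) * (Q ^ 2 + 5 * Q + 8)) := by
    rw [hA2, hc1, hrdef]
    field_simp
  rw [hval] at hfinal
  exact hfinal
end
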